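/- arXiv:2107.02101 — 3 statements merged into one kernel-verified Lean document; each statement's English description precedes it below -/
import Mathlib

section
/- For every s in [0, d/2), the Sobolev space H^s(T^d) is continuously embedded in B^{s - d/2}(T^d), and there exists a constant C > 0 depending only on d and on the cut-off chi such that ||f||_{B^{s-d/2}} <= (C/sqrt(d/2 - s)) ||f||_{H^s} for all f in H^s(T^d). -/
/-!
Littlewood–Paley theory on the torus `𝕋^d = [-π,π]^d`, realized through
`2π`-periodic functions on `ℝ^d`.
-/

noncomputable section

open MeasureTheory Real Set
open scoped ENNReal

namespace LPT

/-- Points of `ℝ^d`; the torus is realized through `2π`-periodicity. -/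
abbrev Pt (d : ℕ) := Fin d → ℝ

/-- Scalar fields on the torus. -/
abbrev SF (d : ℕ) := Pt d → ℝ

/-- The fundamental domain `[-π,π]^d`. -/
def box (d : ℕ) : Set (Pt d) := Set.univ.pi fun _ => Set.Ioc (-π) π

/-- Lebesgue measure on the fundamental domain. -/
def volT (d : ℕ) : Measure (Pt d) := volume.restrict (box d)

/-- `2π`-periodicity in each variable. -/
def Per {d : ℕ} {α : Type*} (f : Pt d → α) : Prop :=
  ∀ (x : Pt d) (k : Fin d → ℤ), f (fun i => x i + 2 * π * (k i : ℝ)) = f x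

/-- Partial derivative `∂_i`. -/
def pd {d : ℕ} (i : Fin d) (f : SF d) : SF d := fun x => fderiv ℝ f x (Pi.single i 1)

/-- Iterated partial derivative `∂_i^n`. -/
def pdIter {d : ℕ} (i : Fin d) : ℕ → SF d → SF d
  | 0, f => f
  | n + 1, f => pd i (pdIter i n f)

/-- Multi-index derivative `∂^α = ∂_{x_1}^{α_1} ⋯ ∂_{x_d}^{α_d}`. -/
def pdMulti {d : ℕ} (α : Fin d → ℕ) (f : SF d) : SF d :=
  (List.finRange d).foldr (fun i g => pdIter i (α i) g) f

/-- The gradient, as a Euclidean-space valued map. -/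
def gradE {d : ℕ} (f : SF d) : Pt d → EuclideanSpace ℝ (Fin d) := fun x => WithLp.toLp 2 (fun i => pd i f x)

/-- Fourier coefficient of a scalar field on the torus. -/
def fc {d : ℕ} (f : SF d) (n : Fin d → ℤ) : ℂ :=
  (((2 * π) ^ d : ℝ) : ℂ)⁻¹ *
    ∫ x, (f x : ℂ) * Complex.exp (-(Complex.I * ∑ i, (n i : ℂ) * (x i : ℂ))) ∂volT d

/-- Magnitude of a frequency. -/
def nmag {d : ℕ} (n : Fin d → ℤ) : ℝ := Real.sqrt (∑ i, ((n i : ℝ)) ^ 2)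

/-- Sobolev `H^s` norm (Fourier side): `‖f‖²_{H^s} = ∑_n (1+|n|)^{2s} |f_n|²`. -/
def sobN {d : ℕ} (s : ℝ) (f : SF d) : ℝ :=
  Real.sqrt (∑' n : Fin d → ℤ, (1 + nmag n) ^ (2 * s) * ‖fc f n‖ ^ 2)

/-- Membership in the Sobolev space `H^s` (Fourier side). -/
def InSob {d : ℕ} (s : ℝ) (f : SF d) : Prop :=
  Integrable f (volT d) ∧
    Summable fun n : Fin d → ℤ => (1 + nmag n) ^ (2 * s) * ‖fc f n‖ ^ 2

/-- A Littlewood–Paley cut-off function: smooth, radial, supported in `B(0,4/3)`,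
equal to `1` on `B(0,3/4)`, and radially nonincreasing. -/
structure IsLPCutoff (d : ℕ) (χ : Pt d → ℝ) : Prop where
  smooth : ContDiff ℝ (⊤ : ℕ∞) χ
  radial : ∀ x y : Pt d, (∑ i, x i ^ 2) = (∑ i, y i ^ 2) → χ x = χ y
  supp : ∀ x : Pt d, (16 : ℝ) / 9 ≤ ∑ i, x i ^ 2 → χ x = 0
  eq_one : ∀ x : Pt d, (∑ i, x i ^ 2) ≤ (9 : ℝ) / 16 → χ x = 1
  antitone : ∀ e : Pt d, (∑ i, e i ^ 2) = 1 →
    AntitoneOn (fun r : ℝ => χ (r • e)) (Set.Ici 0)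

/-- Fourier multiplier of the dyadic block `Δ_q`: `χ(n)` for `q = -1` and
`φ(2^{-q} n) = χ(2^{-q-1} n) - χ(2^{-q} n)` for `q ≥ 0` (and `0` for `q < -1`). -/
def lpMult {d : ℕ} (χ : Pt d → ℝ) (q : ℤ) (n : Fin d → ℤ) : ℝ :=
  if q < -1 then 0
  else if q = -1 then χ fun i => (n i : ℝ)
  else χ (fun i => (2 : ℝ) ^ (-(q + 1)) * (n i : ℝ)) - χ fun i => (2 : ℝ) ^ (-q) * (n i : ℝ)

/-- Dyadic block `Δ_q`. -/
def lpB {d : ℕ} (χ : Pt d → ℝ) (q : ℤ) (f : SF d) : SF d := fun x =>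
  (∑' n : Fin d → ℤ,
      (lpMult χ q n : ℂ) * fc f n * Complex.exp (Complex.I * ∑ i, (n i : ℂ) * (x i : ℂ))).re

/-- Low frequency cut-off `S_q = ∑_{k=-1}^{q-1} Δ_k`. -/
def lpS {d : ℕ} (χ : Pt d → ℝ) (q : ℤ) (f : SF d) : SF d := fun x =>
  ∑ k ∈ Finset.Icc (-1 : ℤ) (q - 1), lpB χ k f x

/-- The spectral localization `∑_n f_n χ(λ⁻¹ n) e^{i n·x}` used in the definition of
the space `B^σ`. -/
def chiProj {d : ℕ} (χ : Pt d → ℝ) (lam : ℝ) (f : SF d) : SF d := fun x =>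
  (∑' n : Fin d → ℤ, ((χ fun i => (n i : ℝ) / lam) : ℂ) * fc f n *
      Complex.exp (Complex.I * ∑ i, (n i : ℂ) * (x i : ℂ))).re

/-- The `B^σ` norm:
`‖f‖_{B^σ} = sup_{λ ≥ 1} λ^σ ‖∑_n f_n χ(λ⁻¹ n) e^{i n·x}‖_{L^∞}`. -/
def bSigN {d : ℕ} (χ : Pt d → ℝ) (σ : ℝ) (f : SF d) : ℝ :=
  sSup {r : ℝ | ∃ lam : ℝ, 1 ≤ lam ∧
    r = lam ^ σ * (eLpNorm (chiProj χ lam f) ⊤ (volT d)).toReal}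

lemma chi_bounds {d : ℕ} {χ : Pt d → ℝ} (hχ : IsLPCutoff d χ) (x : Pt d) :
    0 ≤ χ x ∧ χ x ≤ 1 := by
  rcases le_or_gt (∑ i, x i ^ 2) (9/16) with h | h
  · rw [hχ.eq_one x h]; exact ⟨zero_le_one, le_refl 1⟩
  · have hS0 : (0:ℝ) < ∑ i, x i ^ 2 := lt_trans (by norm_num) h
    set r := Real.sqrt (∑ i, x i ^ 2) with hr
    have hr0 : 0 < r := Real.sqrt_pos.mpr hS0
    set e : Pt d := r⁻¹ • x with he
    have hre : r • e = x := by
      rw [he, smul_smul, mul_inv_cancel₀ hr0.ne', one_smul]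
    have hee : (∑ i, e i ^ 2) = 1 := by
      have : ∀ i, e i ^ 2 = r⁻¹ ^ 2 * x i ^ 2 := by
        intro i; simp [he, mul_pow]
      rw [Finset.sum_congr rfl fun i _ => this i, ← Finset.mul_sum]
      rw [hr, ← Real.sqrt_inv, Real.sq_sqrt (by positivity)]
      field_simp
    have hanti := hχ.antitone e hee
    have hsum_smul : ∀ t : ℝ, (∑ i, (t • e) i ^ 2) = t ^ 2 := by
      intro t
      have : ∀ i, (t • e) i ^ 2 = t ^ 2 * e i ^ 2 := by
        intro i; simp [mul_pow]
      rw [Finset.sum_congr rfl fun i _ => this i, ← Finset.mul_sum, hee, mul_one]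
    constructor
    · have h0 : χ ((max r 2) • e) = 0 := by
        apply hχ.supp
        rw [hsum_smul]
        nlinarith [le_max_right r 2]
      rw [← hre, ← h0]
      exact hanti (mem_Ici.mpr hr0.le) (mem_Ici.mpr (le_max_of_le_left hr0.le))
        (le_max_left r 2)
    · have h1 : χ ((0:ℝ) • e) = 1 := by
        apply hχ.eq_one
        rw [hsum_smul]; norm_num
      rw [← hre, ← h1]
      exact hanti (mem_Ici.mpr le_rfl) (mem_Ici.mpr hr0.le) hr0.le

lemma nmag_nonneg {d : ℕ} (n : Fin d → ℤ) : 0 ≤ nmag n := Real.sqrt_nonneg _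

lemma abs_le_nmag {d : ℕ} (n : Fin d → ℤ) (i : Fin d) : |(n i : ℝ)| ≤ nmag n := by
  rw [← Real.sqrt_sq_eq_abs]
  exact Real.sqrt_le_sqrt (Finset.single_le_sum (fun j _ => sq_nonneg ((n j : ℝ)))
    (Finset.mem_univ i))

/-- The support finset for frequencies of `chiProj χ lam f`. -/
lemma chiProj_support {d : ℕ} {χ : Pt d → ℝ} (hχ : IsLPCutoff d χ) {lam : ℝ}
    (hlam : 1 ≤ lam) (n : Fin d → ℤ)
    (hn : n ∉ Finset.Icc (fun _ : Fin d => -(⌈2*lam⌉₊ : ℤ)) (fun _ => (⌈2*lam⌉₊ : ℤ))) :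
    χ (fun i => (n i : ℝ) / lam) = 0 := by
  have hlam0 : (0:ℝ) < lam := lt_of_lt_of_le one_pos hlam
  apply hχ.supp
  rw [Finset.mem_Icc] at hn
  push_neg at hn
  have : ∃ i, (⌈2*lam⌉₊ : ℤ) < |n i| := by
    rcases not_and_or.mp (fun hc => hn hc.1 hc.2)  with h | h
    · rw [Pi.le_def, not_forall] at h
      obtain ⟨i, hi⟩ := h
      have h2 : n i < -(⌈2*lam⌉₊ : ℤ) := lt_of_not_ge hi
      exact ⟨i, lt_of_lt_of_le (by linarith) (neg_le_abs _)⟩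
    · rw [Pi.le_def, not_forall] at h
      obtain ⟨i, hi⟩ := h
      exact ⟨i, lt_of_lt_of_le (lt_of_not_ge hi) (le_abs_self _)⟩
  obtain ⟨i, hi⟩ := this
  have h2 : 2 * lam < |(n i : ℝ)| := by
    have h1 : (2:ℝ) * lam ≤ (⌈2*lam⌉₊ : ℝ) := Nat.le_ceil _
    have : ((⌈2*lam⌉₊ : ℤ) : ℝ) < |(n i : ℝ)| := by
      rw [← Int.cast_abs] at *
      exact_mod_cast Int.cast_lt.mpr hi
    push_cast at this ⊢
    linarith
  have hterm : (16:ℝ)/9 ≤ ((n i : ℝ) / lam) ^ 2 := by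
    rw [div_pow]
    rw [div_le_div_iff₀ (by norm_num) (by positivity)]
    have : (2 * lam)^2 < (n i : ℝ)^2 := by
      rw [← sq_abs ((n i : ℝ))]
      exact pow_lt_pow_left₀ h2 (by positivity) (by norm_num)
    nlinarith
  calc (16:ℝ)/9 ≤ ((n i : ℝ) / lam) ^ 2 := hterm
    _ ≤ ∑ j, ((n j : ℝ) / lam) ^ 2 :=
        Finset.single_le_sum (f := fun j => ((n j : ℝ)/lam)^2)
          (fun j _ => sq_nonneg _) (Finset.mem_univ i)

lemma chiProj_bound {d : ℕ} {χ : Pt d → ℝ} (hχ : IsLPCutoff d χ) {lam : ℝ}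
    (hlam : 1 ≤ lam) (f : SF d) (x : Pt d) :
    |chiProj χ lam f x| ≤
      ∑ n ∈ Finset.Icc (fun _ : Fin d => -(⌈2*lam⌉₊ : ℤ)) (fun _ => (⌈2*lam⌉₊ : ℤ)),
        ‖fc f n‖ := by
  classical
  set F := Finset.Icc (fun _ : Fin d => -(⌈2*lam⌉₊ : ℤ)) (fun _ => (⌈2*lam⌉₊ : ℤ)) with hF
  have hts : (∑' n : Fin d → ℤ, ((χ fun i => (n i : ℝ) / lam) : ℂ) * fc f n *
      Complex.exp (Complex.I * ∑ i, (n i : ℂ) * (x i : ℂ)))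
      = ∑ n ∈ F, ((χ fun i => (n i : ℝ) / lam) : ℂ) * fc f n *
        Complex.exp (Complex.I * ∑ i, (n i : ℂ) * (x i : ℂ)) := by
    apply tsum_eq_sum
    intro n hn
    rw [chiProj_support hχ hlam n hn]
    simp
  rw [chiProj, hts]
  refine le_trans (Complex.abs_re_le_norm _) ?_
  refine le_trans (norm_sum_le _ _) ?_
  apply Finset.sum_le_sum
  intro n _
  rw [norm_mul, norm_mul]
  have hexp : ‖Complex.exp (Complex.I * ∑ i, (n i : ℂ) * (x i : ℂ))‖ = 1 := by
    have hcast : (∑ i, (n i : ℂ) * (x i : ℂ)) = ((∑ i, (n i : ℝ) * (x i) : ℝ) : ℂ) := by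
      push_cast; ring
    rw [hcast, mul_comm, Complex.norm_exp_ofReal_mul_I]
  rw [hexp, mul_one, Complex.norm_real, Real.norm_eq_abs]
  have hb := chi_bounds hχ (fun i => (n i : ℝ) / lam)
  have : |χ fun i => (n i : ℝ) / lam| ≤ 1 := abs_le.mpr ⟨by linarith [hb.1], hb.2⟩
  exact mul_le_of_le_one_left (norm_nonneg _) this

lemma cs_bound {d : ℕ} (s : ℝ) (f : SF d) (F : Finset (Fin d → ℤ))
    (hsum : Summable fun n : Fin d → ℤ => (1 + nmag n) ^ (2 * s) * ‖fc f n‖ ^ 2) :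
    ∑ n ∈ F, ‖fc f n‖ ≤
      Real.sqrt (∑ n ∈ F, (1 + nmag n) ^ (-(2 * s))) * sobN s f := by
  have hx : ∀ n : Fin d → ℤ, (0:ℝ) < 1 + nmag n := fun n => by
    linarith [nmag_nonneg n]
  set a : (Fin d → ℤ) → ℝ := fun n => (1 + nmag n) ^ (-s) with ha
  set b : (Fin d → ℤ) → ℝ := fun n => (1 + nmag n) ^ s * ‖fc f n‖ with hb
  have hab : ∀ n, ‖fc f n‖ = a n * b n := by
    intro n
    rw [ha, hb, ← mul_assoc, ← Real.rpow_add (hx n), neg_add_cancel, Real.rpow_zero, one_mul]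
  have ha2 : ∀ n, a n ^ 2 = (1 + nmag n) ^ (-(2*s)) := by
    intro n
    rw [ha, ← Real.rpow_natCast ((1 + nmag n) ^ (-s)) 2, ← Real.rpow_mul (hx n).le]
    congr 1; push_cast; ring
  have hb2 : ∀ n, b n ^ 2 = (1 + nmag n) ^ (2*s) * ‖fc f n‖ ^ 2 := by
    intro n
    rw [hb, mul_pow, ← Real.rpow_natCast ((1 + nmag n) ^ s) 2, ← Real.rpow_mul (hx n).le]
    congr 2; push_cast; ring
  have key : (∑ n ∈ F, ‖fc f n‖) ^ 2 ≤ (∑ n ∈ F, a n ^ 2) * (∑ n ∈ F, b n ^ 2) := by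
    rw [Finset.sum_congr rfl (fun n _ => hab n)]
    exact Finset.sum_mul_sq_le_sq_mul_sq F a b
  have hnn : 0 ≤ ∑ n ∈ F, ‖fc f n‖ :=
    Finset.sum_nonneg fun n _ => norm_nonneg _
  rw [← Real.sqrt_sq hnn]
  refine le_trans (Real.sqrt_le_sqrt key) ?_
  rw [Real.sqrt_mul (Finset.sum_nonneg fun n _ => sq_nonneg _)]
  apply mul_le_mul
  · apply le_of_eq
    congr 1
    exact Finset.sum_congr rfl fun n _ => ha2 n
  · rw [sobN]
    apply Real.sqrt_le_sqrt
    calc ∑ n ∈ F, b n ^ 2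
        = ∑ n ∈ F, (1 + nmag n) ^ (2*s) * ‖fc f n‖ ^ 2 :=
          Finset.sum_congr rfl fun n _ => hb2 n
      _ ≤ _ := hsum.sum_le_tsum F (fun n _ => mul_nonneg (Real.rpow_nonneg (hx n).le _) (sq_nonneg _))
  · exact Real.sqrt_nonneg _
  · exact Real.sqrt_nonneg _

lemma count_bound (d : ℕ) (hd : 0 < d) (s lam : ℝ) (hs0 : 0 ≤ s) (hs : s < (d:ℝ)/2)
    (hlam : 1 ≤ lam) :
    ∑ n ∈ Finset.Icc (fun _ : Fin d => -(⌈2*lam⌉₊ : ℤ)) (fun _ => (⌈2*lam⌉₊ : ℤ)),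
      (1 + nmag n) ^ (-(2*s)) ≤
      (8:ℝ)^d * (16*(d:ℝ))^d * lam ^ ((d:ℝ) - 2*s) / ((d:ℝ)/2 - s) := by
  classical
  have hlam0 : (0:ℝ) < lam := lt_of_lt_of_le one_pos hlam
  have hD1 : (1:ℝ) ≤ (d:ℝ) := by exact_mod_cast hd
  set N : ℕ := ⌈2*lam⌉₊ with hN
  set F := Finset.Icc (fun _ : Fin d => -(N : ℤ)) (fun _ => (N : ℤ)) with hF
  set J : ℕ := Nat.clog 2 (N*d + 2) with hJ
  set g : (Fin d → ℤ) → ℕ := fun n => Nat.log 2 ⌊1 + nmag n⌋₊ with hg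
  set ε : ℝ := (d:ℝ) - 2*s with hε
  have hε0 : 0 < ε := by rw [hε]; linarith
  have hεd : ε ≤ (d:ℝ) := by rw [hε]; linarith
  set r : ℝ := (2:ℝ) ^ ε with hr
  have hr1 : 1 < r := by
    rw [hr]
    exact (Real.one_lt_rpow_iff_of_pos (by norm_num)).mpr (Or.inl ⟨one_lt_two, hε0⟩)
  have hlow : ∀ n : Fin d → ℤ, ((2:ℝ)) ^ (g n) ≤ 1 + nmag n := by
    intro n
    have hfl : 1 ≤ ⌊1 + nmag n⌋₊ :=
      Nat.le_floor (by push_cast; linarith [nmag_nonneg n])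
    have h1 : (2:ℕ) ^ (g n) ≤ ⌊1 + nmag n⌋₊ := Nat.pow_log_le_self 2 (by omega)
    calc ((2:ℝ))^(g n) = ((2^(g n) : ℕ) : ℝ) := by push_cast; ring
      _ ≤ (⌊1 + nmag n⌋₊ : ℝ) := by exact_mod_cast h1
      _ ≤ 1 + nmag n := Nat.floor_le (by linarith [nmag_nonneg n])
  have hhigh : ∀ n : Fin d → ℤ, 1 + nmag n < (2:ℝ) ^ (g n + 1) := by
    intro n
    have h1 : ⌊1 + nmag n⌋₊ < 2 ^ (g n + 1) := Nat.lt_pow_succ_log_self one_lt_two _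
    have h2 : (1 + nmag n) < (⌊1 + nmag n⌋₊ : ℝ) + 1 := Nat.lt_floor_add_one _
    have h3 : (⌊1 + nmag n⌋₊ : ℝ) + 1 ≤ ((2 ^ (g n + 1) : ℕ) : ℝ) := by exact_mod_cast h1
    calc 1 + nmag n < (⌊1 + nmag n⌋₊ : ℝ) + 1 := h2
      _ ≤ ((2 ^ (g n + 1) : ℕ) : ℝ) := h3
      _ = (2:ℝ) ^ (g n + 1) := by push_cast; ring
  have hnmagF : ∀ n ∈ F, nmag n ≤ (N:ℝ) * d := by
    intro n hn
    rw [hF, Finset.mem_Icc] at hn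
    have hni : ∀ i, ((n i:ℝ))^2 ≤ (N:ℝ)^2 := by
      intro i
      have h1 : -(N:ℤ) ≤ n i := hn.1 i
      have h2 : n i ≤ (N:ℤ) := hn.2 i
      have h1' : -(N:ℝ) ≤ (n i : ℝ) := by exact_mod_cast h1
      have h2' : ((n i : ℝ)) ≤ (N:ℝ) := by exact_mod_cast h2
      exact sq_le_sq' h1' h2'
    have hsum2 : ∑ i, ((n i:ℝ))^2 ≤ (d:ℝ) * (N:ℝ)^2 := by
      calc ∑ i, ((n i:ℝ))^2 ≤ ∑ _i : Fin d, (N:ℝ)^2 :=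
            Finset.sum_le_sum (fun i _ => hni i)
        _ = (d:ℝ) * (N:ℝ)^2 := by
            rw [Finset.sum_const, Finset.card_univ, Fintype.card_fin, nsmul_eq_mul]
    rw [nmag]
    calc Real.sqrt (∑ i, ((n i:ℝ))^2) ≤ Real.sqrt (((N:ℝ)*d)^2) := by
          apply Real.sqrt_le_sqrt
          nlinarith [Nat.cast_nonneg (α := ℝ) N]
      _ = (N:ℝ)*d := Real.sqrt_sq (by positivity)
  have h2J : (N:ℝ)*d + 2 ≤ (2:ℝ)^J := by
    have := Nat.le_pow_clog one_lt_two (N*d + 2)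
    calc (N:ℝ)*d + 2 = ((N*d + 2 : ℕ) : ℝ) := by push_cast; ring
      _ ≤ ((2^J : ℕ) : ℝ) := by exact_mod_cast this
      _ = (2:ℝ)^J := by push_cast; ring
  have hmaps : ∀ n ∈ F, g n ∈ Finset.range (J+1) := by
    intro n hn
    rw [Finset.mem_range]
    have h1 : (2:ℝ)^(g n) < (2:ℝ)^J := by
      calc (2:ℝ)^(g n) ≤ 1 + nmag n := hlow n
        _ ≤ 1 + (N:ℝ)*d := by linarith [hnmagF n hn]
        _ < (N:ℝ)*d + 2 := by linarith
        _ ≤ (2:ℝ)^J := h2J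
    have := (pow_lt_pow_iff_right₀ (a := (2:ℝ)) one_lt_two).mp h1
    omega
  rw [← Finset.sum_fiberwise_of_maps_to hmaps]
  have hinner : ∀ j ∈ Finset.range (J+1),
      ∑ n ∈ F.filter (fun n => g n = j), (1 + nmag n) ^ (-(2*s)) ≤ (8:ℝ)^d * r ^ j := by
    intro j _
    have h2j : (0:ℝ) < (2:ℝ)^j := by positivity
    have hsub : F.filter (fun n => g n = j) ⊆
        Finset.Icc (fun _ : Fin d => -(2^(j+1) : ℤ)) (fun _ => (2^(j+1) : ℤ)) := by
      intro n hn
      rw [Finset.mem_filter] at hn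
      have hnm : nmag n < (2:ℝ)^(j+1) := by
        have := hhigh n; rw [hn.2] at this; linarith
      rw [Finset.mem_Icc]
      constructor <;> intro i
      · have : |(n i : ℝ)| ≤ nmag n := abs_le_nmag n i
        have h4 : -((2:ℝ)^(j+1)) < (n i : ℝ) := by
          have := neg_abs_le ((n i : ℝ)); linarith
        have : -((2:ℤ)^(j+1)) ≤ n i := by
          have h5 : (-((2:ℤ)^(j+1)) : ℝ) < (n i : ℝ) := by push_cast; push_cast at h4; linarith
          exact_mod_cast h5.le
        exact this
      · have : |(n i : ℝ)| ≤ nmag n := abs_le_nmag n i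
        have h4 : (n i : ℝ) < (2:ℝ)^(j+1) := by
          have := le_abs_self ((n i : ℝ)); linarith
        have h5 : (n i : ℝ) < (((2:ℤ)^(j+1)) : ℝ) := by push_cast; push_cast at h4; linarith
        exact_mod_cast h5.le
    have hcard : ((F.filter (fun n => g n = j)).card : ℝ) ≤ ((2:ℝ)^(j+3))^d := by
      have h6 := Finset.card_le_card hsub
      have h7 : (Finset.Icc (fun _ : Fin d => -(2^(j+1) : ℤ)) (fun _ => (2^(j+1) : ℤ))).card
          = (2^(j+2)+1)^d := by
        rw [Pi.card_Icc]
        have : ∀ _i : Fin d, (Finset.Icc (-(2^(j+1) : ℤ)) ((2^(j+1) : ℤ))).card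
            = 2^(j+2)+1 := by
          intro i
          rw [Int.card_Icc]
          have : ((2:ℤ)^(j+1) + 1 - -(2^(j+1))) = ((2^(j+2)+1 : ℕ) : ℤ) := by push_cast; ring
          rw [this, Int.toNat_natCast]
        rw [Finset.prod_congr rfl (fun i _ => this i), Finset.prod_const, Finset.card_univ,
          Fintype.card_fin]
      have h8 : (2^(j+2)+1 : ℕ) ≤ 2^(j+3) := by
        have : (1:ℕ) ≤ 2^(j+2) := Nat.one_le_two_pow
        calc (2^(j+2)+1 : ℕ) ≤ 2^(j+2) + 2^(j+2) := by omega
          _ = 2^(j+3) := by ring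
      calc ((F.filter (fun n => g n = j)).card : ℝ)
          ≤ (((2^(j+2)+1)^d : ℕ) : ℝ) := by rw [← h7]; exact_mod_cast h6
        _ ≤ (((2^(j+3))^d : ℕ) : ℝ) := by exact_mod_cast Nat.pow_le_pow_left h8 d
        _ = ((2:ℝ)^(j+3))^d := by push_cast; ring
    have hterm : ∀ n ∈ F.filter (fun n => g n = j),
        (1 + nmag n) ^ (-(2*s)) ≤ ((2:ℝ)^j) ^ (-(2*s)) := by
      intro n hn
      rw [Finset.mem_filter] at hn
      apply Real.rpow_le_rpow_of_nonpos h2j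
      · have := hlow n; rw [hn.2] at this; exact this
      · linarith
    have halg : ((2:ℝ)^(j+3))^d * ((2:ℝ)^j) ^ (-(2*s)) = (8:ℝ)^d * r ^ j := by
      have e1 : ((2:ℝ)^(j+3)) = (2:ℝ)^j * 8 := by ring
      rw [e1, mul_pow]
      have e2 : (((2:ℝ)^j)^d : ℝ) = ((2:ℝ)^j) ^ ((d:ℕ):ℝ) := (Real.rpow_natCast _ d).symm
      rw [mul_comm (((2:ℝ)^j)^d) ((8:ℝ)^d), mul_assoc, e2,
        ← Real.rpow_add h2j]
      congr 1
      have e3 : ((d:ℕ):ℝ) + -(2*s) = ε := by rw [hε]; ring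
      rw [e3, hr, ← Real.rpow_natCast (2:ℝ) j, ← Real.rpow_mul (by norm_num : (0:ℝ) ≤ 2),
        ← Real.rpow_natCast ((2:ℝ)^ε) j, ← Real.rpow_mul (by norm_num : (0:ℝ) ≤ 2),
        mul_comm]
    calc ∑ n ∈ F.filter (fun n => g n = j), (1 + nmag n) ^ (-(2*s))
        ≤ (F.filter (fun n => g n = j)).card • (((2:ℝ)^j) ^ (-(2*s))) :=
          Finset.sum_le_card_nsmul _ _ _ hterm
      _ = ((F.filter (fun n => g n = j)).card : ℝ) * (((2:ℝ)^j) ^ (-(2*s))) :=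
          nsmul_eq_mul _ _
      _ ≤ ((2:ℝ)^(j+3))^d * (((2:ℝ)^j) ^ (-(2*s))) := by
          apply mul_le_mul_of_nonneg_right hcard (Real.rpow_nonneg h2j.le _)
      _ = (8:ℝ)^d * r ^ j := halg
  have hden : (d:ℝ)/2 - s ≤ r - 1 := by
    have hexp : Real.log 2 * ε + 1 ≤ r := by
      rw [hr, Real.rpow_def_of_pos (by norm_num : (0:ℝ) < 2)]
      linarith [Real.add_one_le_exp (Real.log 2 * ε)]
    have hlog : (1:ℝ)/2 ≤ Real.log 2 := by linarith [Real.log_two_gt_d9]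
    nlinarith [hε0.le]
  have hnum : r ^ (J+1) ≤ (16*(d:ℝ))^d * lam ^ ε := by
    have hJn : (2:ℕ)^J ≤ 2*(N*d+1) := by
      rcases Nat.eq_zero_or_pos J with h0 | hpos
      · rw [h0]; simp; omega
      · have h9 : (2:ℕ)^(J-1) < N*d+2 := Nat.pow_pred_clog_lt_self one_lt_two (x := N*d + 2) (by omega)
        have h10 : (2:ℕ)^J = 2 * 2^(J-1) := by
          conv_lhs => rw [show J = (J-1)+1 by omega]
          ring
        omega
    have hNle : (N:ℝ) ≤ 3*lam := by
      have := Nat.ceil_lt_add_one (by positivity : (0:ℝ) ≤ 2*lam)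
      rw [← hN] at this
      linarith
    have h2J1 : (2:ℝ)^(J+1) ≤ 16*lam*(d:ℝ) := by
      have hc : ((2:ℕ)^J : ℝ) ≤ 2*((N:ℝ)*d+1) := by exact_mod_cast hJn
      have hc2 : ((2:ℕ)^J : ℝ) = (2:ℝ)^J := by push_cast; ring
      have hld : (1:ℝ) ≤ lam * d := by nlinarith
      have : (N:ℝ)*d + 1 ≤ 4*lam*d := by nlinarith
      calc (2:ℝ)^(J+1) = 2 * (2:ℝ)^J := by ring
        _ ≤ 2 * (2*((N:ℝ)*d+1)) := by rw [← hc2]; linarith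
        _ ≤ 16*lam*(d:ℝ) := by nlinarith
    have e4 : r ^ (J+1) = ((2:ℝ)^(J+1)) ^ ε := by
      rw [hr, ← Real.rpow_natCast ((2:ℝ)^ε) (J+1), ← Real.rpow_mul (by norm_num : (0:ℝ) ≤ 2),
        ← Real.rpow_natCast (2:ℝ) (J+1), ← Real.rpow_mul (by norm_num : (0:ℝ) ≤ 2), mul_comm]
    rw [e4]
    calc ((2:ℝ)^(J+1)) ^ ε ≤ (16*lam*(d:ℝ)) ^ ε :=
          Real.rpow_le_rpow (by positivity) h2J1 hε0.le
      _ = ((16*(d:ℝ)) * lam) ^ ε := by ring_nf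
      _ = (16*(d:ℝ)) ^ ε * lam ^ ε := Real.mul_rpow (by positivity) hlam0.le
      _ ≤ (16*(d:ℝ)) ^ ((d:ℕ):ℝ) * lam ^ ε := by
          apply mul_le_mul_of_nonneg_right ?_ (Real.rpow_nonneg hlam0.le _)
          apply Real.rpow_le_rpow_of_exponent_le (by linarith) (by exact_mod_cast hεd)
      _ = (16*(d:ℝ))^d * lam ^ ε := by rw [Real.rpow_natCast]
  have hdenpos : (0:ℝ) < (d:ℝ)/2 - s := by linarith
  calc ∑ j ∈ Finset.range (J+1), ∑ n ∈ F.filter (fun n => g n = j), (1 + nmag n) ^ (-(2*s))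
      ≤ ∑ j ∈ Finset.range (J+1), (8:ℝ)^d * r ^ j := Finset.sum_le_sum hinner
    _ = (8:ℝ)^d * ∑ j ∈ Finset.range (J+1), r ^ j := by rw [Finset.mul_sum]
    _ = (8:ℝ)^d * ((r^(J+1) - 1)/(r - 1)) := by rw [geom_sum_eq hr1.ne']
    _ ≤ (8:ℝ)^d * ((16*(d:ℝ))^d * lam ^ ε / ((d:ℝ)/2 - s)) := by
        apply mul_le_mul_of_nonneg_left ?_ (by positivity)
        apply div_le_div₀ (by positivity) (by linarith) hdenpos hden
    _ = (8:ℝ)^d * (16*(d:ℝ))^d * lam ^ ((d:ℝ) - 2*s) / ((d:ℝ)/2 - s) := by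
        rw [hε]; ring

/-- **Embedding `H^s(𝕋^d) ↪ B^{s-d/2}`** (Lemma `lemma:B-Hs-embedding`):
`‖f‖_{B^{s-d/2}} ≤ (C/√(d/2-s)) ‖f‖_{H^s}` for all `s ∈ [0,d/2)`, with `C` depending
only on `d` and the cut-off `χ`. -/
theorem Hs_embeds_in_Bsigma (d : ℕ) (hd : 0 < d) (χ : Pt d → ℝ) (hχ : IsLPCutoff d χ) :
    ∃ C > 0, ∀ s ∈ Set.Ico (0 : ℝ) ((d : ℝ) / 2), ∀ f : SF d, Per f → InSob s f →
      bSigN χ (s - (d : ℝ) / 2) f ≤ C / Real.sqrt ((d : ℝ) / 2 - s) * sobN s f := by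
  classical
  have hD1 : (1:ℝ) ≤ (d:ℝ) := by exact_mod_cast hd
  refine ⟨Real.sqrt ((8:ℝ)^d * (16*(d:ℝ))^d), ?_, ?_⟩
  · apply Real.sqrt_pos.mpr
    positivity
  intro s hs f _hPer hf
  obtain ⟨hs0, hs2⟩ := hs
  have hsob0 : 0 ≤ sobN s f := Real.sqrt_nonneg _
  have hdenpos : (0:ℝ) < (d:ℝ)/2 - s := by linarith
  set C := Real.sqrt ((8:ℝ)^d * (16*(d:ℝ))^d) with hC
  have hC0 : 0 ≤ C := Real.sqrt_nonneg _
  have hRHS0 : 0 ≤ C / Real.sqrt ((d:ℝ)/2 - s) * sobN s f := by positivity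
  apply Real.sSup_le ?_ hRHS0
  rintro x ⟨lam, hlam, rfl⟩
  have hlam0 : (0:ℝ) < lam := lt_of_lt_of_le one_pos hlam
  set F := Finset.Icc (fun _ : Fin d => -(⌈2*lam⌉₊ : ℤ)) (fun _ => (⌈2*lam⌉₊ : ℤ)) with hF
  set M := ∑ n ∈ F, ‖fc f n‖ with hM
  have hM0 : 0 ≤ M := Finset.sum_nonneg fun n _ => norm_nonneg _
  have hbd : eLpNorm (chiProj χ lam f) ⊤ (volT d) ≤ ENNReal.ofReal M := by
    rw [eLpNorm_exponent_top]
    apply eLpNormEssSup_le_of_ae_bound (C := M)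
    apply ae_of_all
    intro x
    rw [Real.norm_eq_abs]
    exact chiProj_bound hχ hlam f x
  have htoReal : (eLpNorm (chiProj χ lam f) ⊤ (volT d)).toReal ≤ M :=
    ENNReal.toReal_le_of_le_ofReal hM0 hbd
  have hKbound := count_bound d hd s lam hs0 hs2 hlam
  have hcs := cs_bound s f F hf.2
  have hlamsig : (0:ℝ) ≤ lam ^ (s - (d:ℝ)/2) := Real.rpow_nonneg hlam0.le _
  have hchain : lam ^ (s - (d:ℝ)/2) * (eLpNorm (chiProj χ lam f) ⊤ (volT d)).toReal
      ≤ lam ^ (s - (d:ℝ)/2) *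
        (Real.sqrt ((8:ℝ)^d * (16*(d:ℝ))^d * lam ^ ((d:ℝ) - 2*s) / ((d:ℝ)/2 - s)) *
          sobN s f) := by
    apply mul_le_mul_of_nonneg_left ?_ hlamsig
    calc (eLpNorm (chiProj χ lam f) ⊤ (volT d)).toReal ≤ M := htoReal
      _ ≤ Real.sqrt (∑ n ∈ F, (1 + nmag n)^(-(2*s))) * sobN s f := hcs
      _ ≤ Real.sqrt ((8:ℝ)^d * (16*(d:ℝ))^d * lam ^ ((d:ℝ) - 2*s) / ((d:ℝ)/2 - s)) *
            sobN s f := by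
          exact mul_le_mul_of_nonneg_right (Real.sqrt_le_sqrt hKbound) hsob0
  refine le_trans hchain ?_
  have hsq : Real.sqrt ((8:ℝ)^d * (16*(d:ℝ))^d * lam ^ ((d:ℝ) - 2*s) / ((d:ℝ)/2 - s))
      = C * lam ^ (((d:ℝ) - 2*s)/2) / Real.sqrt ((d:ℝ)/2 - s) := by
    have hA0 : (0:ℝ) ≤ (8:ℝ)^d * (16*(d:ℝ))^d := by positivity
    rw [Real.sqrt_div (by positivity) _, Real.sqrt_mul hA0 _]
    have hl : Real.sqrt (lam ^ ((d:ℝ)-2*s)) = lam ^ (((d:ℝ)-2*s)/2) := by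
      rw [Real.sqrt_eq_rpow, ← Real.rpow_mul hlam0.le]
      congr 1
      ring
    rw [hl, hC]
  rw [hsq]
  apply le_of_eq
  have hone : lam ^ (s - (d:ℝ)/2) * lam ^ (((d:ℝ) - 2*s)/2) = 1 := by
    rw [← Real.rpow_add hlam0]
    have : s - (d:ℝ)/2 + ((d:ℝ) - 2*s)/2 = 0 := by ring
    rw [this, Real.rpow_zero]
  calc lam ^ (s - (d:ℝ)/2) * (C * lam ^ (((d:ℝ) - 2*s)/2) / Real.sqrt ((d:ℝ)/2 - s) * sobN s f)
      = (lam ^ (s - (d:ℝ)/2) * lam ^ (((d:ℝ) - 2*s)/2)) *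
          (C / Real.sqrt ((d:ℝ)/2 - s) * sobN s f) := by ring
    _ = C / Real.sqrt ((d:ℝ)/2 - s) * sobN s f := by rw [hone, one_mul]

end LPT
end
end

section
/- The function mu: [0, infinity) -> [0, infinity) defined by mu(r) = r (1 + ln(1 + 1/r)) (1 + ln(1 + ln(1 + 1/r))) for r > 0 and mu(0) = 0 is a nondecreasing, nonzero continuous function with mu(0) = 0, and it satisfies the Osgood condition: the integral of 1/mu(r) dr over (0, 1] diverges, i.e. int_0^1 dr/mu(r) = +infinity. -/
/-! Write `ℓ(r) = ln (1 + 1/r)`. Near `0`, `μ(r) ≤ r (1 + ℓ(r))² ≤ r (2 - ln r)² → 0`, which gives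
continuity at `0`. Since `ℓ' = -1/(r (r + 1))` and `ℓ ≥ 1/(r + 1)`, the derivative
`μ' = (1 + ln (1 + ℓ)) (1 + ℓ - 1/(r + 1)) - 1/(r + 1)` is nonnegative. Finally
`-ln (1 + ln (1 + ℓ(r)))` is a primitive of `1/((r + 1) μ(r)) ≤ 1/μ(r)` tending to `-∞` as
`r → 0⁺`, so `1/μ` is not integrable on `(0, 1]`. -/

noncomputable section

open MeasureTheory Real Set
open scoped ENNReal

/-- The double-logarithmic Osgood modulus of continuity
`μ(r) = r (1 + ln(1 + 1/r)) (1 + ln(1 + ln(1 + 1/r)))` for `r > 0`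
(note that this formula also gives `μ(0) = 0`, since `1/0 = 0` and `ln 1 = 0`). -/
def muOsg (r : ℝ) : ℝ :=
  r * (1 + Real.log (1 + 1 / r)) * (1 + Real.log (1 + Real.log (1 + 1 / r)))

open Filter Topology Asymptotics

def logOneAddInv (r : ℝ) : ℝ := Real.log (1 + 1 / r)

theorem muOsg_eq_logOneAddInv (r : ℝ) :
    muOsg r = r * (1 + logOneAddInv r) * (1 + Real.log (1 + logOneAddInv r)) := rfl

def muOsgPrimitive (r : ℝ) : ℝ := -Real.log (1 + Real.log (1 + logOneAddInv r))

section

variable {r : ℝ}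

theorem inv_add_one_le_logOneAddInv (hr : 0 < r) : (r + 1)⁻¹ ≤ logOneAddInv r := by
  have h := one_sub_inv_le_log_of_pos (x := 1 + 1 / r) (by positivity)
  rwa [show 1 - (1 + 1 / r)⁻¹ = (r + 1)⁻¹ by field_simp; ring] at h

theorem logOneAddInv_pos (hr : 0 < r) : 0 < logOneAddInv r :=
  (by positivity : (0 : ℝ) < (r + 1)⁻¹).trans_le (inv_add_one_le_logOneAddInv hr)

theorem logOneAddInv_le_one_sub_log (hr : 0 < r) (hr1 : r ≤ 1) :
    logOneAddInv r ≤ 1 - Real.log r := by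
  rw [logOneAddInv, show 1 + 1 / r = (r + 1) / r by field_simp, Real.log_div (by positivity) hr.ne']
  linarith [Real.log_le_sub_one_of_pos (show 0 < r + 1 by positivity)]

theorem hasDerivAt_logOneAddInv (hr : 0 < r) :
    HasDerivAt logOneAddInv (-(r * (r + 1))⁻¹) r := by
  have h := ((hasDerivAt_inv hr.ne').const_add 1).log (by positivity : (1 : ℝ) + r⁻¹ ≠ 0)
  convert h using 1
  · ext x; simp [logOneAddInv]
  · field_simp

theorem muOsg_pos (hr : 0 < r) : 0 < muOsg r := by
  have := logOneAddInv_pos hr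
  have := Real.log_nonneg (by linarith : (1 : ℝ) ≤ 1 + logOneAddInv r)
  rw [muOsg_eq_logOneAddInv]
  positivity

theorem muOsg_nonneg (hr : 0 ≤ r) : 0 ≤ muOsg r := by
  rcases hr.eq_or_lt with rfl | hr
  · simp [muOsg]
  · exact (muOsg_pos hr).le

theorem muOsg_le_mul_sq (hr : 0 < r) : muOsg r ≤ r * (1 + logOneAddInv r) ^ 2 := by
  have hℓ := logOneAddInv_pos hr
  have hlog := Real.log_le_sub_one_of_pos (by linarith : (0 : ℝ) < 1 + logOneAddInv r)
  rw [muOsg_eq_logOneAddInv, sq, ← mul_assoc]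
  gcongr
  linarith

theorem hasDerivAt_muOsg (hr : 0 < r) :
    HasDerivAt muOsg ((1 + Real.log (1 + logOneAddInv r)) * (1 + logOneAddInv r - (r + 1)⁻¹)
      - (r + 1)⁻¹) r := by
  have hℓ := (hasDerivAt_logOneAddInv hr).const_add 1
  have hne : 1 + logOneAddInv r ≠ 0 := by linarith [logOneAddInv_pos hr]
  refine (((hasDerivAt_id' r).mul hℓ).mul ((hℓ.log hne).const_add 1)).congr_deriv ?_
  simp only [Pi.mul_apply]
  field_simp
  ring

-- `ℓ ≥ (r + 1)⁻¹` makes the second factor of `μ'` at least `1`.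
theorem deriv_muOsg_nonneg (hr : 0 < r) : 0 ≤ deriv muOsg r := by
  have hℓ := inv_add_one_le_logOneAddInv hr
  have hlog := Real.log_nonneg (by linarith [logOneAddInv_pos hr] : (1 : ℝ) ≤ 1 + logOneAddInv r)
  have hinv : (r + 1)⁻¹ ≤ 1 := inv_le_one_of_one_le₀ (by linarith)
  rw [(hasDerivAt_muOsg hr).deriv]
  nlinarith

theorem hasDerivAt_muOsgPrimitive (hr : 0 < r) :
    HasDerivAt muOsgPrimitive ((r + 1) * muOsg r)⁻¹ r := by
  have hℓ := (hasDerivAt_logOneAddInv hr).const_add 1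
  have hℓpos := logOneAddInv_pos hr
  have h := ((hℓ.log (by linarith)).const_add 1).log
    (by linarith [Real.log_nonneg (by linarith : (1 : ℝ) ≤ 1 + logOneAddInv r)])
  have h' : HasDerivAt muOsgPrimitive _ r := h.neg
  convert h' using 1
  rw [muOsg_eq_logOneAddInv]
  field_simp

end

theorem tendsto_mul_sq_one_add_logOneAddInv :
    Tendsto (fun r ↦ r * (1 + logOneAddInv r) ^ 2) (𝓝[>] 0) (𝓝 0) := by
  have hsqrt : Tendsto (fun r : ℝ ↦ √r) (𝓝[>] 0) (𝓝 0) := by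
    simpa using (continuous_sqrt.tendsto 0).mono_left nhdsWithin_le_nhds
  have hlog : Tendsto (fun r ↦ Real.log r * √r) (𝓝[>] 0) (𝓝 0) := by
    simpa [Real.sqrt_eq_rpow] using tendsto_log_mul_rpow_nhdsGT_zero one_half_pos
  have hbound : Tendsto (fun r ↦ (2 * √r - Real.log r * √r) ^ 2) (𝓝[>] 0) (𝓝 0) := by
    simpa using ((hsqrt.const_mul 2).sub hlog).pow 2
  refine squeeze_zero' ?_ ?_ hbound
  · filter_upwards [self_mem_nhdsWithin] with r (hr : 0 < r)
    positivity
  · filter_upwards [self_mem_nhdsWithin, Ioo_mem_nhdsGT one_pos] with r (hr : 0 < r) hr1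
    have := logOneAddInv_pos hr
    have := logOneAddInv_le_one_sub_log hr hr1.2.le
    calc r * (1 + logOneAddInv r) ^ 2 ≤ r * (2 - Real.log r) ^ 2 := by gcongr; linarith
      _ = (2 * √r - Real.log r * √r) ^ 2 := by
        rw [show 2 * √r - Real.log r * √r = √r * (2 - Real.log r) by ring, mul_pow,
          Real.sq_sqrt hr.le]

theorem continuousOn_muOsg : ContinuousOn muOsg (Ici 0) := by
  intro r (hr : 0 ≤ r)
  rcases hr.eq_or_lt with rfl | hr
  · rw [← Ioi_insert, continuousWithinAt_insert_self, ContinuousWithinAt,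
      show muOsg 0 = 0 by simp [muOsg]]
    refine squeeze_zero' ?_ ?_ tendsto_mul_sq_one_add_logOneAddInv
    · filter_upwards [self_mem_nhdsWithin] with r (hr : 0 < r)
      exact (muOsg_pos hr).le
    · filter_upwards [self_mem_nhdsWithin] with r hr
      exact muOsg_le_mul_sq hr
  · exact (hasDerivAt_muOsg hr).continuousAt.continuousWithinAt

theorem monotoneOn_muOsg : MonotoneOn muOsg (Ici 0) := by
  refine monotoneOn_of_deriv_nonneg (convex_Ici 0) continuousOn_muOsg ?_ ?_ <;>
    rw [interior_Ici]
  · exact fun r hr ↦ (hasDerivAt_muOsg hr).differentiableAt.differentiableWithinAt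
  · exact fun r hr ↦ deriv_muOsg_nonneg hr

theorem tendsto_logOneAddInv_nhdsGT_zero : Tendsto logOneAddInv (𝓝[>] 0) atTop := by
  have h : Tendsto (fun r : ℝ ↦ 1 + 1 / r) (𝓝[>] 0) atTop := by
    simpa only [one_div] using tendsto_atTop_add_const_left _ 1 (tendsto_inv_nhdsGT_zero (𝕜 := ℝ))
  exact Real.tendsto_log_atTop.comp h

theorem tendsto_muOsgPrimitive_nhdsGT_zero : Tendsto muOsgPrimitive (𝓝[>] 0) atBot := by
  have h := tendsto_atTop_add_const_left _ 1 tendsto_logOneAddInv_nhdsGT_zero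
  have h' := tendsto_atTop_add_const_left _ 1 (Real.tendsto_log_atTop.comp h)
  exact tendsto_neg_atTop_atBot.comp (Real.tendsto_log_atTop.comp h')

theorem not_integrableOn_one_div_muOsg : ¬IntegrableOn (fun r ↦ 1 / muOsg r) (Ioc 0 1) := by
  refine not_integrableOn_of_tendsto_norm_atTop_of_deriv_isBigO_filter (f := muOsgPrimitive)
    (𝓝[>] 0) (Ioc_mem_nhdsGT one_pos) ?_ ?_ ?_
  · filter_upwards [self_mem_nhdsWithin] with r hr
    exact (hasDerivAt_muOsgPrimitive hr).differentiableAt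
  · exact tendsto_abs_atBot_atTop.comp tendsto_muOsgPrimitive_nhdsGT_zero
  · refine IsBigO.of_bound 1 ?_
    filter_upwards [self_mem_nhdsWithin] with r (hr : 0 < r)
    have hμ := muOsg_pos hr
    rw [(hasDerivAt_muOsgPrimitive hr).deriv, one_mul, Real.norm_of_nonneg (by positivity),
      Real.norm_of_nonneg (by positivity), one_div]
    exact inv_anti₀ hμ (by nlinarith)

/-- **`μ` is an Osgood modulus of continuity**: it maps `[0,∞)` to `[0,∞)`, is
nondecreasing, nonzero and continuous on `[0,∞)` with `μ(0) = 0`, and satisfies the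
Osgood condition `∫₀¹ dr/μ(r) = +∞`. -/
theorem muOsg_is_osgood_modulus :
    (∀ r : ℝ, 0 ≤ r → 0 ≤ muOsg r) ∧
    MonotoneOn muOsg (Set.Ici 0) ∧
    ContinuousOn muOsg (Set.Ici 0) ∧
    muOsg 0 = 0 ∧
    (∃ r : ℝ, 0 ≤ r ∧ muOsg r ≠ 0) ∧
    (∫⁻ r in Set.Ioc (0 : ℝ) 1, ENNReal.ofReal (1 / muOsg r)) = ⊤ := by
  refine ⟨fun r ↦ muOsg_nonneg, monotoneOn_muOsg, continuousOn_muOsg, by simp [muOsg],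
    ⟨1, zero_le_one, (muOsg_pos one_pos).ne'⟩, ?_⟩
  by_contra h
  refine not_integrableOn_one_div_muOsg ((lintegral_ofReal_ne_top_iff_integrable ?_ ?_).1 h)
  · exact Measurable.aestronglyMeasurable (by unfold muOsg; fun_prop)
  · filter_upwards [ae_restrict_mem measurableSet_Ioc] with r hr
    exact (one_div_pos.2 (muOsg_pos hr.1)).le
end
end

section
/- For every real number N >= 1, setting epsilon = 1/(2 + 2 ln N), one has epsilon in (0, 1/2] and (N/epsilon)^{epsilon/(1 - epsilon)} <= e^2. -/
noncomputable section

open Real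

/-- **The choice of the interpolation parameter `ε`** (inequality `\eqref{esNee1}`):
for every real `N ≥ 1`, setting `ε = 1/(2 + 2 ln N)` one has `ε ∈ (0, 1/2]` and
`(N/ε)^{ε/(1-ε)} ≤ e²`. -/
theorem eps_choice_bound (N : ℝ) (hN : 1 ≤ N) :
    0 < 1 / (2 + 2 * Real.log N) ∧
    1 / (2 + 2 * Real.log N) ≤ 1 / 2 ∧
    (N / (1 / (2 + 2 * Real.log N))) ^
        ((1 / (2 + 2 * Real.log N)) / (1 - 1 / (2 + 2 * Real.log N))) ≤ Real.exp 2 := by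
  set L := Real.log N with hLdef
  have hL : 0 ≤ L := Real.log_nonneg hN
  have hD : (0:ℝ) < 2 + 2 * L := by linarith
  have hN0 : 0 < N := lt_of_lt_of_le one_pos hN
  refine ⟨by positivity, ?_, ?_⟩
  · apply one_div_le_one_div_of_le <;> linarith
  · have hbase : N / (1 / (2 + 2 * L)) = N * (2 + 2 * L) := by
      field_simp
    have hexp : (1 / (2 + 2 * L)) / (1 - 1 / (2 + 2 * L)) = 1 / (1 + 2 * L) := by
      rw [div_eq_div_iff]
      · field_simp; ring
      · rw [ne_eq, sub_eq_zero]
        intro h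
        have : (2:ℝ) + 2 * L = 1 := by
          field_simp at h; linarith
        linarith
      · positivity
    rw [hbase, hexp]
    have hx : 0 < N * (2 + 2 * L) := by positivity
    rw [Real.rpow_def_of_pos hx, Real.exp_le_exp, Real.log_mul (ne_of_gt hN0) (ne_of_gt hD)]
    have hlog : Real.log (2 + 2 * L) ≤ (2 + 2 * L) - 1 := Real.log_le_sub_one_of_pos hD
    rw [mul_one_div, div_le_iff₀ (by linarith : (0:ℝ) < 1 + 2 * L)]
    linarith
end
end
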